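/- arXiv:1808.00017 — 4 statements merged into one kernel-verified Lean document; each statement's English description precedes it below -/
import Mathlib

section
/- Let p_h, p, C, σ be real numbers with p_h > 0, p > 0, C ≥ 0, and 0 < σ ≤ 1. Set u = C/p, for each real Δ set λ(Δ) = (⌊Δ/p⌋ + 1)·p − Δ, and set η = u if σ ≥ u, and η = u + (C − σ·p)/p_h if σ < u. Then for every real Δ ≥ p_h: (⌊Δ/p⌋·C + max(0, C − σ·λ(Δ)))/Δ ≤ η. -/
theorem stmt4 (p_h p C σ : ℝ) (hph : p_h > 0) (hp : p > 0) (hC : C ≥ 0)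
    (hσ0 : 0 < σ) (hσ1 : σ ≤ 1) :
    ∀ Δ : ℝ, Δ ≥ p_h →
      ((⌊Δ / p⌋ : ℝ) * C + max 0 (C - σ * ((⌊Δ / p⌋ + 1) * p - Δ))) / Δ
        ≤ if σ ≥ C / p then C / p else C / p + (C - σ * p) / p_h := by
  intro Δ hΔ
  have hΔ0 : (0:ℝ) < Δ := lt_of_lt_of_le hph hΔ
  have h1 : (⌊Δ / p⌋ : ℝ) * p ≤ Δ := by
    have h := Int.floor_le (Δ / p)
    have := mul_le_mul_of_nonneg_right h hp.le
    rwa [div_mul_cancel₀ _ hp.ne'] at this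
  have h2 : Δ < ((⌊Δ / p⌋ : ℝ) + 1) * p := by
    have h := Int.lt_floor_add_one (Δ / p)
    have := mul_lt_mul_of_pos_right h hp
    rwa [div_mul_cancel₀ _ hp.ne'] at this
  have hn0 : (0:ℝ) ≤ (⌊Δ / p⌋ : ℝ) := by
    have : (0:ℤ) ≤ ⌊Δ / p⌋ := Int.floor_nonneg.mpr (by positivity)
    exact_mod_cast this
  set n : ℝ := (⌊Δ / p⌋ : ℝ)
  set u : ℝ := C / p with hu
  have hup : u * p = C := div_mul_cancel₀ _ hp.ne'
  have hu0 : 0 ≤ u := by positivity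
  by_cases hcase : σ ≥ u
  · rw [if_pos hcase]
    rw [div_le_iff₀ hΔ0]
    have hmax : max 0 (C - σ * ((n + 1) * p - Δ)) ≤ u * (Δ - n * p) := by
      apply max_le
      · nlinarith
      · have hL : (0:ℝ) ≤ (n + 1) * p - Δ := by linarith
        nlinarith [mul_le_mul_of_nonneg_right hcase hL]
    have hnC : n * C = u * (n * p) := by rw [← hup]; ring
    have hexp : u * (Δ - n * p) = u * Δ - u * (n * p) := by ring
    linarith [hmax]
  · rw [if_neg hcase]
    push_neg at hcase
    rw [div_le_iff₀ hΔ0]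
    have hσp : σ * p < C := by nlinarith
    have hL1 : 0 < (n + 1) * p - Δ := by linarith
    have hL2 : (n + 1) * p - Δ ≤ p := by linarith
    have hmax : max 0 (C - σ * ((n + 1) * p - Δ)) = C - σ * ((n + 1) * p - Δ) := by
      apply max_eq_right
      nlinarith
    rw [hmax]
    have key : n * C + (C - σ * ((n + 1) * p - Δ)) ≤ u * Δ + (C - σ * p) := by
      nlinarith [mul_le_mul_of_nonneg_left hL2 (sub_nonneg.mpr hcase.le)]
    have h3 : (C - σ * p) / p_h * Δ ≥ C - σ * p := by
      rw [ge_iff_le, div_mul_eq_mul_div, le_div_iff₀ hph]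
      nlinarith
    nlinarith
end

section
/- Let p, C, σ be real numbers with p > 0, C ≥ 0, and σ ≥ C/p. For each real Δ set λ(Δ) = (⌊Δ/p⌋ + 1)·p − Δ. Then for every real Δ > 0: ⌊Δ/p⌋·C + max(0, C − σ·λ(Δ)) ≤ (C/p)·Δ. -/
theorem stmt7 (p C σ : ℝ) (hp : p > 0) (hC : C ≥ 0) (hσ : σ ≥ C / p) :
    ∀ Δ : ℝ, Δ > 0 →
      (⌊Δ / p⌋ : ℝ) * C + max 0 (C - σ * ((⌊Δ / p⌋ + 1) * p - Δ)) ≤ (C / p) * Δ := by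
  intro Δ hΔ
  set n : ℝ := (⌊Δ / p⌋ : ℝ) with hn
  have h1 : n ≤ Δ / p := Int.floor_le _
  have h2 : Δ / p < n + 1 := Int.lt_floor_add_one _
  have hlam : (n + 1) * p - Δ ≥ 0 := by
    have := (div_lt_iff₀ hp).mp h2
    linarith
  have hCp : C / p * p = C := div_mul_cancel₀ C hp.ne'
  have hnC : n * C ≤ C / p * Δ := by
    have := mul_le_mul_of_nonneg_right h1 hC
    have hΔp : Δ / p * C = C / p * Δ := by ring
    linarith
  rcases le_or_gt (C - σ * ((n + 1) * p - Δ)) 0 with h | h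
  · rw [max_eq_left h]; linarith
  · rw [max_eq_right h.le]
    have hsl : C / p * ((n + 1) * p - Δ) ≤ σ * ((n + 1) * p - Δ) :=
      mul_le_mul_of_nonneg_right hσ hlam
    nlinarith
end

section
/- Let n ≥ 1, and for i = 1,…,n let p_i > 0 and C_i ≥ 0 be real numbers with u_i = C_i/p_i. Fix an index h and a real σ with p_h > 0 and 0 < σ ≤ 1, let M be a real number, and for each i set η_i = u_i if σ ≥ u_i, and η_i = u_i + (C_i − σ·p_i)/p_h if σ < u_i. For each real Δ and each i, set λ_i(Δ) = (⌊Δ/p_i⌋ + 1)·p_i − Δ. If Σ_{i=1}^n η_i ≤ M − (M − 1)·σ, then for every real Δ ≥ p_h: Σ_{i=1}^n (⌊Δ/p_i⌋·C_i + max(0, C_i − σ·λ_i(Δ))) ≤ (M − (M − 1)·σ)·Δ. -/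
lemma key8 (p C σ ph Δ : ℝ) (hp : 0 < p) (hC : 0 ≤ C) (hσ0 : 0 < σ)
    (hph : 0 < ph) (hΔ : ph ≤ Δ) :
    (⌊Δ / p⌋ : ℝ) * C + max 0 (C - σ * ((⌊Δ / p⌋ + 1) * p - Δ))
      ≤ (if σ ≥ C / p then C / p else C / p + (C - σ * p) / ph) * Δ := by
  set k : ℝ := (⌊Δ / p⌋ : ℝ) with hk
  have hΔ0 : 0 < Δ := lt_of_lt_of_le hph hΔ
  have hk1 : k * p ≤ Δ := by
    rw [← le_div_iff₀ hp]; exact Int.floor_le _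
  have hk2 : Δ < (k + 1) * p := by
    rw [← div_lt_iff₀ hp]; push_cast; exact Int.lt_floor_add_one _
  have hu : C / p * p = C := div_mul_cancel₀ C hp.ne'
  split_ifs with hcase
  · -- σ ≥ C/p, i.e. C ≤ σ p
    have hCσ : C ≤ σ * p := by
      rw [ge_iff_le, div_le_iff₀ hp] at hcase; linarith
    rcases le_or_gt (C - σ * ((k + 1) * p - Δ)) 0 with h0 | h0
    · rw [max_eq_left h0]
      rw [add_zero, div_mul_eq_mul_div, le_div_iff₀ hp]
      nlinarith
    · rw [max_eq_right h0.le, div_mul_eq_mul_div, le_div_iff₀ hp]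
      nlinarith [mul_nonneg (sub_nonneg.mpr hCσ) (sub_nonneg.mpr hk2.le)]
  · -- σ < C/p
    push_neg at hcase
    have hCσ : σ * p < C := by rw [lt_div_iff₀ hp] at hcase; linarith
    have hq : (C - σ * p) / ph * ph = C - σ * p := div_mul_cancel₀ _ hph.ne'
    have hq0 : 0 ≤ (C - σ * p) / ph := div_nonneg (by linarith) hph.le
    have hlp : (k + 1) * p - Δ ≤ p := by linarith
    have hmax : max 0 (C - σ * ((k + 1) * p - Δ)) = C - σ * ((k + 1) * p - Δ) := by
      apply max_eq_right
      nlinarith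
    rw [hmax]
    have h1 : k * C + (C - σ * ((k + 1) * p - Δ)) ≤ C / p * Δ + (C - σ * p) := by
      rw [← sub_nonneg]
      have : C / p * Δ * p = C * Δ := by field_simp
      nlinarith [mul_nonneg (sub_nonneg.mpr hCσ.le) (sub_nonneg.mpr hlp)]
    have h2 : C - σ * p ≤ (C - σ * p) / ph * Δ := by
      nlinarith [mul_le_mul_of_nonneg_left hΔ hq0]
    linarith [h1, h2, show (C / p + (C - σ * p) / ph) * Δ = C / p * Δ + (C - σ * p) / ph * Δ by ring]

theorem stmt8 (n : ℕ) (hn : 1 ≤ n) (p C : Fin n → ℝ)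
    (hp : ∀ i, p i > 0) (hC : ∀ i, C i ≥ 0) (h : Fin n) (σ M : ℝ)
    (hσ0 : 0 < σ) (hσ1 : σ ≤ 1)
    (htest : ∑ i, (if σ ≥ C i / p i then C i / p i
        else C i / p i + (C i - σ * p i) / p h) ≤ M - (M - 1) * σ) :
    ∀ Δ : ℝ, Δ ≥ p h →
      ∑ i, ((⌊Δ / p i⌋ : ℝ) * C i
          + max 0 (C i - σ * ((⌊Δ / p i⌋ + 1) * p i - Δ)))
        ≤ (M - (M - 1) * σ) * Δ := by
  intro Δ hΔ
  have hΔ0 : 0 ≤ Δ := le_of_lt (lt_of_lt_of_le (hp h) hΔ)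
  calc ∑ i, ((⌊Δ / p i⌋ : ℝ) * C i
          + max 0 (C i - σ * ((⌊Δ / p i⌋ + 1) * p i - Δ)))
      ≤ ∑ i, (if σ ≥ C i / p i then C i / p i
        else C i / p i + (C i - σ * p i) / p h) * Δ := by
        apply Finset.sum_le_sum
        intro i _
        exact key8 (p i) (C i) σ (p h) Δ (hp i) (hC i) hσ0 (hp h) hΔ
    _ = (∑ i, (if σ ≥ C i / p i then C i / p i
        else C i / p i + (C i - σ * p i) / p h)) * Δ := (Finset.sum_mul _ _ _).symm
    _ ≤ (M - (M - 1) * σ) * Δ := mul_le_mul_of_nonneg_right htest hΔ0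
end

section
/- Let n ≥ 1, and for i = 1,…,n let p_i > 0 and C_i ≥ 0 be real numbers with u_i = C_i/p_i. Let u_max be a real number with u_i ≤ u_max for all i, and let M be a real number. For each real Δ and each i, set λ_i(Δ) = (⌊Δ/p_i⌋ + 1)·p_i − Δ. If Σ_{i=1}^n u_i ≤ M − (M − 1)·u_max, then for every real Δ > 0: Σ_{i=1}^n (⌊Δ/p_i⌋·C_i + max(0, C_i − u_max·λ_i(Δ))) ≤ (M − (M − 1)·u_max)·Δ. -/
theorem stmt9 (n : ℕ) (hn : 1 ≤ n) (p C : Fin n → ℝ)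
    (hp : ∀ i, p i > 0) (hC : ∀ i, C i ≥ 0) (u_max M : ℝ)
    (hu : ∀ i, C i / p i ≤ u_max)
    (htest : ∑ i, C i / p i ≤ M - (M - 1) * u_max) :
    ∀ Δ : ℝ, Δ > 0 →
      ∑ i, ((⌊Δ / p i⌋ : ℝ) * C i
          + max 0 (C i - u_max * ((⌊Δ / p i⌋ + 1) * p i - Δ)))
        ≤ (M - (M - 1) * u_max) * Δ := by
  intro Δ hΔ
  have key : ∀ i, (⌊Δ / p i⌋ : ℝ) * C i
      + max 0 (C i - u_max * ((⌊Δ / p i⌋ + 1) * p i - Δ)) ≤ (C i / p i) * Δ := by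
    intro i
    have hpi := hp i
    have hCi := hC i
    have hui := hu i
    have hfl : (⌊Δ / p i⌋ : ℝ) ≤ Δ / p i := Int.floor_le _
    have hfl2 : Δ / p i < (⌊Δ / p i⌋ : ℝ) + 1 := Int.lt_floor_add_one _
    have hCu : C i = (C i / p i) * p i := by field_simp
    have hlam : 0 ≤ ((⌊Δ / p i⌋ : ℝ) + 1) * p i - Δ := by
      have := (div_lt_iff₀ hpi).mp hfl2
      linarith
    rcases le_or_gt (C i - u_max * ((⌊Δ / p i⌋ + 1) * p i - Δ)) 0 with h | h
    · rw [max_eq_left h]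
      have : (⌊Δ / p i⌋ : ℝ) * C i ≤ (Δ / p i) * C i :=
        mul_le_mul_of_nonneg_right hfl hCi
      calc (⌊Δ / p i⌋ : ℝ) * C i + 0 ≤ (Δ / p i) * C i := by linarith
        _ = (C i / p i) * Δ := by field_simp
    · rw [max_eq_right h.le]
      have hum : C i / p i ≤ u_max := hui
      nlinarith [mul_le_mul_of_nonneg_right hum hlam, (le_div_iff₀ hpi).mp hfl]
  calc ∑ i, ((⌊Δ / p i⌋ : ℝ) * C i
        + max 0 (C i - u_max * ((⌊Δ / p i⌋ + 1) * p i - Δ)))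
      ≤ ∑ i, (C i / p i) * Δ := Finset.sum_le_sum fun i _ => key i
    _ = (∑ i, C i / p i) * Δ := by rw [Finset.sum_mul]
    _ ≤ (M - (M - 1) * u_max) * Δ := mul_le_mul_of_nonneg_right htest hΔ.le
end
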